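/- arXiv:1501.03640 — 7 statements merged into one kernel-verified Lean document; each statement's English description precedes it below -/
import Mathlib

section
/- Let E ⊆ [0,∞) contain 0 and let r̃ = (r_n) be a normalizing sequence. Define Ω̄^E_{0,r̃} = { t ∈ [0,∞) : there exists a sequence (x_n) in E with x_n → 0 and t = lim_n x_n/r_n }. Then Ω̄^E_{0,r̃} is a closed subset of [0,∞); equivalently, every pretangent space Ω^E_{0,r̃} is a complete metric space. -/
/-! A point `p` is a limit of a sequence `xₙ ∈ Aₙ` exactly when `infDist p Aₙ → 0` (and every
`Aₙ` is nonempty). The functions `p ↦ infDist p Aₙ` are all `1`-Lipschitz, hence equicontinuous,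
and the set where an equicontinuous sequence converges to `0` is closed. So the Kuratowski lower
limit of any sequence of sets is closed, and `Ω̄^E_{0,r̃}` is the slice `{0} × ℝ` of the lower
limit in `ℝ × ℝ` of `Aₙ = {(a, a / rₙ) | a ∈ E}`. -/

open Filter Topology

/-- `Omega E r` is the set `Ω̄^E_{0,r̃}` of all limits `lim xₙ / rₙ` over sequences `(xₙ)`
in `E` tending to `0` for which this limit exists. -/
def Omega (E : Set ℝ) (r : ℕ → ℝ) : Set ℝ :=
  {t : ℝ | ∃ x : ℕ → ℝ, (∀ n, x n ∈ E) ∧ Tendsto x atTop (nhds 0) ∧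
    Tendsto (fun n => x n / r n) atTop (nhds t)}

open Metric

section SeqLowerLimit

variable {X : Type*} [PseudoMetricSpace X]

def seqLowerLimit (A : ℕ → Set X) : Set X :=
  {p | ∃ x : ℕ → X, (∀ n, x n ∈ A n) ∧ Tendsto x atTop (𝓝 p)}

theorem mem_seqLowerLimit_iff_tendsto_infDist {A : ℕ → Set X} (hA : ∀ n, (A n).Nonempty)
    {p : X} : p ∈ seqLowerLimit A ↔ Tendsto (fun n => infDist p (A n)) atTop (𝓝 0) := by
  constructor
  · rintro ⟨x, hxA, hx⟩
    refine squeeze_zero (fun n => infDist_nonneg) (fun n => infDist_le_dist_of_mem (hxA n)) ?_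
    simpa [dist_comm] using (tendsto_iff_dist_tendsto_zero.mp hx)
  · intro h
    have hclose : ∀ n, ∃ y ∈ A n, dist p y < infDist p (A n) + 1 / (n + 1) := fun n =>
      (infDist_lt_iff (hA n)).mp (lt_add_of_pos_right _ Nat.one_div_pos_of_nat)
    choose x hxA hx using hclose
    refine ⟨x, hxA, tendsto_iff_dist_tendsto_zero.mpr ?_⟩
    have hbound : Tendsto (fun n : ℕ => infDist p (A n) + 1 / (n + 1)) atTop (𝓝 0) := by
      simpa using h.add tendsto_one_div_add_atTop_nhds_zero_nat
    exact squeeze_zero (fun n => dist_nonneg)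
      (fun n => (dist_comm (x n) p).trans_le (hx n).le) hbound

theorem isClosed_seqLowerLimit (A : ℕ → Set X) : IsClosed (seqLowerLimit A) := by
  by_cases hA : ∀ n, (A n).Nonempty
  · have hequi : Equicontinuous fun n p => infDist p (A n) :=
      (LipschitzWith.uniformEquicontinuous _ 1 fun n => lipschitz_infDist_pt (A n)).equicontinuous
    have hset : seqLowerLimit A = {p | Tendsto (fun n => infDist p (A n)) atTop (𝓝 0)} :=
      Set.ext fun p => mem_seqLowerLimit_iff_tendsto_infDist hA
    rw [hset]
    exact hequi.isClosed_setOfPred_tendsto continuous_const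
  · obtain ⟨n, hn⟩ := not_forall.mp hA
    have hempty : seqLowerLimit A = ∅ :=
      Set.eq_empty_of_forall_notMem fun p ⟨x, hxA, _⟩ => hn ⟨x n, hxA n⟩
    exact hempty ▸ isClosed_empty

end SeqLowerLimit

theorem Omega_eq_preimage_seqLowerLimit (E : Set ℝ) (r : ℕ → ℝ) :
    Omega E r =
      (fun t => ((0 : ℝ), t)) ⁻¹' seqLowerLimit fun n => (fun a => (a, a / r n)) '' E := by
  ext t
  constructor
  · rintro ⟨x, hxE, hx0, hxt⟩
    exact ⟨fun n => (x n, x n / r n), fun n => ⟨x n, hxE n, rfl⟩, hx0.prodMk_nhds hxt⟩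
  · rintro ⟨y, hyA, hy⟩
    choose x hxE hxy using hyA
    have hy' : y = fun n => (x n, x n / r n) := funext fun n => (hxy n).symm
    subst hy'
    exact ⟨x, hxE, hy.fst_nhds, hy.snd_nhds⟩

theorem Omega_isClosed_general
    (E : Set ℝ) (r : ℕ → ℝ) :
    IsClosed (Omega E r) := by
  rw [Omega_eq_preimage_seqLowerLimit]
  exact (isClosed_seqLowerLimit _).preimage (Continuous.prodMk_right 0)

theorem Omega_isClosed
    (E : Set ℝ) (hE : E ⊆ Set.Ici 0) (h0E : (0 : ℝ) ∈ E)
    (r : ℕ → ℝ) (hrpos : ∀ n, 0 < r n) (hr0 : Tendsto r atTop (nhds 0)) :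
    IsClosed (Omega E r) :=
  Omega_isClosed_general E r
end

section
/- Let E, T ⊆ [0,∞) with 0 ∈ E ∩ T and let r̃ be a normalizing sequence. Write E ⪯ T if for every sequence (e_n) in E \ {0} with e_n → 0 there exists a sequence (t_n) in T \ {0} with lim_n e_n/t_n = 1. If E ⪯ T and T ⪯ E, then Ω̄^E_{0,r̃} = Ω̄^T_{0,r̃}. -/
open Filter Topology

/-- `E ⪯ T` : for every sequence in `E \ {0}` tending to `0` there is a sequence in
`T \ {0}` with ratio tending to `1`. -/
def Prec (E T : Set ℝ) : Prop :=
  ∀ e : ℕ → ℝ, (∀ n, e n ∈ E \ {0}) → Tendsto e atTop (nhds 0) →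
    ∃ t : ℕ → ℝ, (∀ n, t n ∈ T \ {0}) ∧ Tendsto (fun n => e n / t n) atTop (nhds 1)

/-! A sequence `x` realising `t ≠ 0` in `Ω̄^E` is eventually nonzero, so `E ⪯ T` replaces it
by a sequence `y` of `T` with `x / y → 1`; then `y → 0` and `y / r = (x / r) / (x / y) → t`. -/

theorem tendsto_zero_of_tendsto_div_nhds_one {α G₀ : Type*} [CommGroupWithZero G₀]
    [TopologicalSpace G₀] [ContinuousInv₀ G₀] [ContinuousMul G₀] [T1Space G₀]
    {l : Filter α} {x y : α → G₀} (hx : Tendsto x l (𝓝 0))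
    (hxy : Tendsto (fun n => x n / y n) l (𝓝 1)) :
    Tendsto y l (𝓝 0) := by
  have hx_ne : ∀ᶠ n in l, x n ≠ 0 :=
    (hxy.eventually_ne one_ne_zero).mono fun n h hxn => h (by simp [hxn])
  have h := hx.div hxy one_ne_zero
  rw [zero_div] at h
  refine h.congr' ?_
  filter_upwards [hx_ne] with n hxn
  exact div_div_cancel₀ hxn

theorem Prec.exists_tendsto_div_of_eventually_ne {E T : Set ℝ} (hET : Prec E T)
    {x : ℕ → ℝ} (hxE : ∀ n, x n ∈ E) (hx0 : Tendsto x atTop (𝓝 0))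
    (hx : ∀ᶠ n in atTop, x n ≠ 0) :
    ∃ y : ℕ → ℝ, (∀ n, y n ∈ T) ∧ Tendsto (fun n => x n / y n) atTop (𝓝 1) := by
  obtain ⟨N, hN⟩ := eventually_atTop.1 hx
  obtain ⟨y, hyT, hxy⟩ := hET (fun n => x (n + N))
    (fun n => ⟨hxE _, hN _ (Nat.le_add_left N n)⟩) (hx0.comp (tendsto_add_atTop_nat N))
  refine ⟨fun n => y (n - N), fun n => (hyT _).1, ?_⟩
  refine (hxy.comp (tendsto_sub_atTop_nat N)).congr' ?_
  filter_upwards [eventually_ge_atTop N] with n hn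
  simp [Nat.sub_add_cancel hn]

theorem zero_mem_Omega {E : Set ℝ} (h0 : (0 : ℝ) ∈ E) (r : ℕ → ℝ) : (0 : ℝ) ∈ Omega E r :=
  ⟨fun _ => 0, fun _ => h0, tendsto_const_nhds, by simp⟩

theorem Omega_subset_of_prec {E T : Set ℝ} (h0T : (0 : ℝ) ∈ T) (hET : Prec E T)
    (r : ℕ → ℝ) : Omega E r ⊆ Omega T r := by
  rintro t ⟨x, hxE, hx0, hxr⟩
  rcases eq_or_ne t 0 with rfl | ht
  · exact zero_mem_Omega h0T r
  have hx_ne : ∀ᶠ n in atTop, x n ≠ 0 :=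
    (hxr.eventually_ne ht).mono fun n h hxn => h (by simp [hxn])
  obtain ⟨y, hyT, hxy⟩ := hET.exists_tendsto_div_of_eventually_ne hxE hx0 hx_ne
  refine ⟨y, hyT, tendsto_zero_of_tendsto_div_nhds_one hx0 hxy, ?_⟩
  have h := hxr.div hxy one_ne_zero
  rw [div_one] at h
  refine h.congr' ?_
  filter_upwards [hx_ne] with n hxn
  exact div_div_div_cancel_left' _ _ hxn

theorem Omega_eq_of_prec_general
    (E T : Set ℝ)
    (h0E : (0 : ℝ) ∈ E) (h0T : (0 : ℝ) ∈ T)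
    (r : ℕ → ℝ)
    (hET : Prec E T) (hTE : Prec T E) :
    Omega E r = Omega T r :=
  (Omega_subset_of_prec h0T hET r).antisymm (Omega_subset_of_prec h0E hTE r)

theorem Omega_eq_of_prec
    (E T : Set ℝ) (hE : E ⊆ Set.Ici 0) (hT : T ⊆ Set.Ici 0)
    (h0E : (0 : ℝ) ∈ E) (h0T : (0 : ℝ) ∈ T)
    (r : ℕ → ℝ) (hrpos : ∀ n, 0 < r n) (hr0 : Tendsto r atTop (nhds 0))
    (hET : Prec E T) (hTE : Prec T E) :
    Omega E r = Omega T r :=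
  Omega_eq_of_prec_general E T h0E h0T r hET hTE
end

section
/- Let E, T ⊆ [0,∞). If E ⪯ T and T ⪯ E, then the sets of porosity numbers at 0 of E and T coincide: P(E) = P(T). -/
/-! If every point of `T` close to `0` lies within a factor `1 ± ε` of a point of `E`, then
shrinking a gap `(a, b) ⊆ (0, h)` of `E` to `(a (1 + ε), b (1 - ε))` gives a gap of `T`, so
`λ(E, h) ≤ λ(T, h) + 2εh`. With `E ⪯ T` and `T ⪯ E` this holds in both directions for every
`ε > 0` once `h` is small, hence `λ(E, h)/h - λ(T, h)/h → 0` as `h → 0⁺` and the two sets have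
the same limit points along every sequence `h_k → 0⁺`. -/

open Filter Topology

/-- `lam E h` : the length of the largest open subinterval of `(0, h)` containing no point
of `E`. -/
noncomputable def lam (E : Set ℝ) (h : ℝ) : ℝ :=
  sSup {l : ℝ | ∃ a b : ℝ, 0 ≤ a ∧ a ≤ b ∧ b ≤ h ∧ Set.Ioo a b ∩ E = ∅ ∧ l = b - a}

/-- The set of porosity numbers of `E` at `0`. -/
def porosityNumbers (E : Set ℝ) : Set ℝ :=
  {p : ℝ | ∃ h : ℕ → ℝ, (∀ k, 0 < h k) ∧ Tendsto h atTop (nhds 0) ∧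
    Tendsto (fun k => lam E (h k) / h k) atTop (nhds p)}

open Set

section lam

variable {E : Set ℝ} {h : ℝ}

lemma sub_le_lam {a b : ℝ} (ha : 0 ≤ a) (hab : a ≤ b) (hb : b ≤ h) (hgap : Ioo a b ∩ E = ∅) :
    b - a ≤ lam E h :=
  le_csSup ⟨h, by rintro _ ⟨a, b, ha, -, hb, -, rfl⟩; linarith⟩ ⟨a, b, ha, hab, hb, hgap, rfl⟩

lemma lam_nonneg (hh : 0 ≤ h) : 0 ≤ lam E h := by
  simpa using sub_le_lam (E := E) le_rfl le_rfl hh (by simp)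

lemma lam_le {c : ℝ} (hh : 0 ≤ h)
    (hc : ∀ a b, 0 ≤ a → a ≤ b → b ≤ h → Ioo a b ∩ E = ∅ → b - a ≤ c) : lam E h ≤ c :=
  csSup_le ⟨0, 0, 0, le_rfl, le_rfl, hh, by simp, by ring⟩
    (by rintro _ ⟨a, b, ha, hab, hb, hgap, rfl⟩; exact hc a b ha hab hb hgap)

lemma lam_le_lam_add {T : Set ℝ} {ε : ℝ} (hε : 0 ≤ ε) (hε1 : ε < 1) (hh : 0 ≤ h)
    (hTE : ∀ t ∈ Ioo 0 h, t ∈ T → ∃ e ∈ E, e * (1 - ε) < t ∧ t < e * (1 + ε)) :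
    lam E h ≤ lam T h + 2 * ε * h := by
  refine lam_le hh fun a b ha hab hb hgap => ?_
  rcases le_or_gt (b - a) (2 * ε * h) with hsmall | hlarge
  · linarith [lam_nonneg (E := T) hh]
  have hgapT : Ioo (a * (1 + ε)) (b * (1 - ε)) ∩ T = ∅ := by
    refine eq_empty_of_forall_notMem fun t ⟨⟨hat, htb⟩, htT⟩ => ?_
    have ht0 : 0 < t := lt_of_le_of_lt (by positivity) hat
    have hth : t < h := by nlinarith
    obtain ⟨e, heE, hlo, hhi⟩ := hTE t ⟨ht0, hth⟩ htT
    have hae : a < e := by nlinarith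
    have heb : e < b := by nlinarith
    exact hgap.subset ⟨⟨hae, heb⟩, heE⟩
  have := sub_le_lam (h := h) (by positivity) (by nlinarith) (by nlinarith) hgapT
  nlinarith

end lam

lemma Prec.eventually_exists_near {E T : Set ℝ} (hTE : Prec T E) {ε : ℝ} (hε : 0 < ε)
    (hε1 : ε ≤ 1) :
    ∀ᶠ t in 𝓝[>] 0, t ∈ T → ∃ e ∈ E, e * (1 - ε) < t ∧ t < e * (1 + ε) := by
  by_contra hfreq
  obtain ⟨t, ht, hbad⟩ := frequently_iff_seq_forall.mp
    ((not_eventually.mp hfreq).and_eventually self_mem_nhdsWithin)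
  simp only [Classical.not_imp, not_exists, not_and, not_lt] at hbad
  obtain ⟨e, heE, hratio⟩ := hTE t (fun n => ⟨(hbad n).1.1, (hbad n).2.ne'⟩)
    (ht.mono_right nhdsWithin_le_nhds)
  obtain ⟨n, hn⟩ := (hratio.eventually (Ioo_mem_nhds (by linarith : 1 - ε < 1)
    (by linarith : (1 : ℝ) < 1 + ε))).exists
  have hpos : 0 < t n / e n := lt_of_le_of_lt (by linarith) hn.1
  have he : 0 < e n := (div_pos_iff_of_pos_left (hbad n).2).mp hpos
  rw [lt_div_iff₀ he, div_lt_iff₀ he] at hn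
  linarith [(hbad n).1.2 (e n) (heE n).1 (by linarith)]

lemma eventually_nhdsGT_forall_Ioo {α : Type*} [LinearOrder α] [TopologicalSpace α]
    [OrderTopology α] [NoMaxOrder α] {a : α} {p : α → Prop} (hp : ∀ᶠ t in 𝓝[>] a, p t) :
    ∀ᶠ h in 𝓝[>] a, ∀ t ∈ Ioo a h, p t := by
  obtain ⟨u, hu, hsub⟩ := mem_nhdsGT_iff_exists_Ioo_subset.mp hp
  filter_upwards [Ioo_mem_nhdsGT hu] with h hh t ht using hsub ⟨ht.1, ht.2.trans hh.2⟩

lemma tendsto_lam_div_sub_lam_div {E T : Set ℝ} (hET : Prec E T) (hTE : Prec T E) :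
    Tendsto (fun h => lam E h / h - lam T h / h) (𝓝[>] 0) (𝓝 0) := by
  refine Metric.tendsto_nhds.mpr fun ε hε => ?_
  set η := min (ε / 3) (1 / 2)
  have hη : 0 < η := lt_min (by linarith) (by norm_num)
  have hη1 : η < 1 := (min_le_right _ _).trans_lt (by norm_num)
  filter_upwards [eventually_nhdsGT_forall_Ioo (hTE.eventually_exists_near hη hη1.le),
    eventually_nhdsGT_forall_Ioo (hET.eventually_exists_near hη hη1.le), self_mem_nhdsWithin]
    with h hTh hEh (hh : 0 < h)
  have hEle := lam_le_lam_add hη.le hη1 hh.le hTh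
  have hTle := lam_le_lam_add hη.le hη1 hh.le hEh
  rw [Real.dist_eq, sub_zero, div_sub_div_same, abs_div, abs_of_pos hh, div_lt_iff₀ hh, abs_lt]
  constructor <;> nlinarith [min_le_left (ε / 3) (1 / 2)]

lemma porosityNumbers_subset_of_prec {E T : Set ℝ} (hET : Prec E T) (hTE : Prec T E) :
    porosityNumbers E ⊆ porosityNumbers T := by
  rintro p ⟨h, hpos, h0, hp⟩
  refine ⟨h, hpos, h0, ?_⟩
  have hh : Tendsto h atTop (𝓝[>] 0) :=
    tendsto_nhdsWithin_iff.mpr ⟨h0, .of_forall hpos⟩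
  simpa using hp.sub ((tendsto_lam_div_sub_lam_div hET hTE).comp hh)

theorem porosityNumbers_eq_of_prec_general
    (E T : Set ℝ)
    (hET : Prec E T) (hTE : Prec T E) :
    porosityNumbers E = porosityNumbers T :=
  (porosityNumbers_subset_of_prec hET hTE).antisymm (porosityNumbers_subset_of_prec hTE hET)

theorem porosityNumbers_eq_of_prec
    (E T : Set ℝ) (hE : E ⊆ Set.Ici 0) (hT : T ⊆ Set.Ici 0)
    (hET : Prec E T) (hTE : Prec T E) :
    porosityNumbers E = porosityNumbers T :=
  porosityNumbers_eq_of_prec_general E T hET hTE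
end

section
/- Let E = {n_1, n_2, ...} ⊆ ℕ with n_k < n_{k+1} for every k, and let μ : ℕ → (0,∞) be strictly decreasing with μ(n) → 0. Then the upper porosity of E at infinity w.r.t. μ satisfies p̄_μ(E) = 1 − liminf_{k→∞} μ(n_k)/μ(n_{k−1}). -/
/-!
Every gap `(n_k, n_{k+1})` of `E` is a hole starting at `n_k`, so `λ_μ(E, n_k) / μ(n_k)` is at
least `1 - μ(n_{k+1}) / μ(n_k)`; this gives `≥` along the subsequence `n_k`. Conversely a hole
`(a, b)` with `n ≤ a` sits inside some gap `[n_j, n_{j+1}]` with `n_j ≤ a`, and since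
`x ↦ (x - μ(n_{j+1})) / x` is increasing, `(μ a - μ b) / μ n ≤ 1 - μ(n_{j+1}) / μ(n_j)`.
-/

open Filter Topology

/-- `lamMu μ E n`: the analogue of the largest-hole length at infinity, i.e. the supremum
of `μ a - μ b` over `n ≤ a < b` such that no element of `E` lies strictly between `a` and `b`. -/
noncomputable def lamMu (μ : ℕ → ℝ) (E : Set ℕ) (n : ℕ) : ℝ :=
  sSup {d : ℝ | ∃ a b : ℕ, n ≤ a ∧ a < b ∧ (∀ m : ℕ, a < m → m < b → m ∉ E) ∧ d = μ a - μ b}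

/-- The upper porosity of `E` at infinity w.r.t. the scaling function `μ`. -/
noncomputable def upperPorosityInf (μ : ℕ → ℝ) (E : Set ℕ) : ℝ :=
  Filter.limsup (fun n => lamMu μ E n / μ n) Filter.atTop

/-- The lower porosity of `E` at infinity w.r.t. the scaling function `μ`. -/
noncomputable def lowerPorosityInf (μ : ℕ → ℝ) (E : Set ℕ) : ℝ :=
  Filter.liminf (fun n => lamMu μ E n / μ n) Filter.atTop

/-- The set of porosity numbers of `E` at infinity w.r.t. `μ`. -/
def porosityNumbersInf (μ : ℕ → ℝ) (E : Set ℕ) : Set ℝ :=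
  {p : ℝ | ∃ n : ℕ → ℕ, StrictMono n ∧
    Tendsto (fun k => lamMu μ E (n k) / μ (n k)) atTop (nhds p)}

open Set

theorem StrictMono.exists_le_and_lt_succ {φ : ℕ → ℕ} (hφ : StrictMono φ) {a : ℕ}
    (ha : φ 0 ≤ a) : ∃ j, φ j ≤ a ∧ a < φ (j + 1) := by
  obtain ⟨j, hj, hj'⟩ :=
    hφ.exists_between_of_tendsto_atTop hφ.tendsto_atTop (Nat.lt_succ_of_le ha)
  exact ⟨j, Nat.le_of_lt_succ hj, hj'⟩

theorem sub_le_mul_one_sub_div {x p q N : ℝ} (hq : 0 < q) (hqx : q ≤ x) (hxp : x ≤ p)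
    (hxN : x ≤ N) : x - q ≤ N * (1 - q / p) := by
  have hp : 0 < p := hq.trans_le (hqx.trans hxp)
  have hqp : q / p ≤ 1 := (div_le_one hp).2 (hqx.trans hxp)
  calc x - q ≤ x * (1 - q / p) := by
        rw [mul_sub, mul_one, sub_le_sub_iff_left, mul_div_assoc', div_le_iff₀ hp, mul_comm q]
        gcongr
    _ ≤ N * (1 - q / p) := mul_le_mul_of_nonneg_right hxN (sub_nonneg.2 hqp)

section lamMu

variable {μ : ℕ → ℝ} {E : Set ℕ} {n : ℕ}

theorem le_lamMu (hμ : Antitone μ) (hpos : ∀ m, 0 ≤ μ m) {a b : ℕ} (hna : n ≤ a) (hab : a < b)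
    (hgap : ∀ m, a < m → m < b → m ∉ E) : μ a - μ b ≤ lamMu μ E n := by
  refine le_csSup ⟨μ n, ?_⟩ ⟨a, b, hna, hab, hgap, rfl⟩
  rintro _ ⟨a, b, hna, -, -, rfl⟩
  linarith [hμ hna, hpos b]

theorem lamMu_le {c : ℝ}
    (h : ∀ a b, n ≤ a → a < b → (∀ m, a < m → m < b → m ∉ E) → μ a - μ b ≤ c) :
    lamMu μ E n ≤ c := by
  refine csSup_le ⟨_, n, n + 1, le_rfl, n.lt_succ_self, fun m h₁ h₂ => by omega, rfl⟩ ?_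
  rintro _ ⟨a, b, hna, hab, hgap, rfl⟩
  exact h a b hna hab hgap

theorem lamMu_div_mem_Icc (hμ : Antitone μ) (hpos : ∀ m, 0 ≤ μ m) :
    lamMu μ E n / μ n ∈ Icc 0 1 := by
  have hnonneg : 0 ≤ lamMu μ E n :=
    (sub_nonneg.2 (hμ n.le_succ)).trans
      (le_lamMu hμ hpos le_rfl n.lt_succ_self fun m h₁ h₂ => by omega)
  have hle : lamMu μ E n ≤ μ n :=
    lamMu_le fun a b hna _ _ => by linarith [hμ hna, hpos b]
  exact ⟨div_nonneg hnonneg (hpos n), div_le_one_of_le₀ hle (hpos n)⟩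

end lamMu

section range

variable {μ : ℕ → ℝ} {φ : ℕ → ℕ}

theorem one_sub_div_le_lamMu_range_div (hμ : Antitone μ) (hpos : ∀ m, 0 < μ m)
    (hφ : StrictMono φ) (k : ℕ) :
    1 - μ (φ (k + 1)) / μ (φ k) ≤ lamMu μ (range φ) (φ k) / μ (φ k) := by
  rw [one_sub_div (hpos _).ne']
  refine div_le_div_of_nonneg_right ?_ (hpos _).le
  exact le_lamMu hμ (fun m => (hpos m).le) le_rfl (hφ k.lt_succ_self) fun m h₁ h₂ =>
    fun ⟨i, hi⟩ => hφ.monotone.ne_of_lt_of_lt_nat k h₁ h₂ i hi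

theorem lamMu_range_le_mul (hμ : Antitone μ) (hpos : ∀ m, 0 < μ m) (hφ : StrictMono φ)
    {K n : ℕ} {c : ℝ} (hKn : φ K ≤ n)
    (hc : ∀ j, K ≤ j → 1 - μ (φ (j + 1)) / μ (φ j) ≤ c) :
    lamMu μ (range φ) n ≤ μ n * c := by
  refine lamMu_le fun a b hna _ hgap => ?_
  obtain ⟨j, hja, haj⟩ :=
    hφ.exists_le_and_lt_succ ((hφ.monotone K.zero_le).trans (hKn.trans hna))
  have hKj : K ≤ j := Nat.le_of_lt_succ (hφ.lt_iff_lt.1 ((hKn.trans hna).trans_lt haj))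
  have hbj : b ≤ φ (j + 1) := not_lt.1 fun h => hgap _ haj h ⟨j + 1, rfl⟩
  calc μ a - μ b ≤ μ a - μ (φ (j + 1)) := by linarith [hμ hbj]
    _ ≤ μ n * (1 - μ (φ (j + 1)) / μ (φ j)) :=
      sub_le_mul_one_sub_div (hpos _) (hμ haj.le) (hμ hja) (hμ hna)
    _ ≤ μ n * c := mul_le_mul_of_nonneg_left (hc j hKj) (hpos n).le

end range

theorem upperPorosityInf_eq_general
    (μ : ℕ → ℝ) (hμanti : StrictAnti μ) (hμpos : ∀ n, 0 < μ n)
    (nseq : ℕ → ℕ) (hmono : StrictMono nseq) :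
    upperPorosityInf μ (Set.range nseq) =
      1 - Filter.liminf (fun k => μ (nseq (k + 1)) / μ (nseq k)) Filter.atTop := by
  set r := fun k => μ (nseq (k + 1)) / μ (nseq k)
  set f := fun n => lamMu μ (range nseq) n / μ n
  have hμ := hμanti.antitone
  have hf : ∀ n, f n ∈ Icc 0 1 := fun n => lamMu_div_mem_Icc hμ fun m => (hμpos m).le
  have hr : ∀ k, r k ∈ Icc 0 1 := fun k =>
    ⟨div_nonneg (hμpos _).le (hμpos _).le, div_le_one_of_le₀ (hμ (hmono.monotone k.le_succ))
      (hμpos _).le⟩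
  have hg : ∀ k, 1 - r k ∈ Icc 0 1 := fun k => ⟨by linarith [(hr k).2], by linarith [(hr k).1]⟩
  rw [upperPorosityInf, ← limsup_const_sub _ r 1 (isCoboundedUnder_ge_of_le _ fun k => (hr k).2)
    (isBoundedUnder_of ⟨0, fun k => (hr k).1⟩)]
  apply le_antisymm
  · refine le_of_forall_gt_imp_ge_of_dense fun c hc => ?_
    obtain ⟨K, hK⟩ := eventually_atTop.1 <|
      eventually_lt_of_limsup_lt hc (isBoundedUnder_of ⟨1, fun k => (hg k).2⟩)
    refine limsup_le_of_le (isCoboundedUnder_le_of_le _ fun n => (hf n).1) <|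
      eventually_atTop.2 ⟨nseq K, fun n hn => ?_⟩
    rw [div_le_iff₀ (hμpos n), mul_comm]
    exact lamMu_range_le_mul hμ hμpos hmono hn fun j hj => (hK j hj).le
  · calc limsup (fun k => 1 - r k) atTop ≤ limsup (f ∘ nseq) atTop :=
          limsup_le_limsup (Eventually.of_forall (one_sub_div_le_lamMu_range_div hμ hμpos hmono))
            (isCoboundedUnder_le_of_le _ fun k => (hg k).1)
            (isBoundedUnder_of ⟨1, fun k => (hf _).2⟩)
      _ ≤ limsup f atTop :=
          hmono.tendsto_atTop.limsup_comp_le_limsup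
            (isCoboundedUnder_le_of_le _ fun n => (hf n).1)
            (isBoundedUnder_of ⟨1, fun n => (hf n).2⟩)

theorem upperPorosityInf_eq
    (μ : ℕ → ℝ) (hμanti : StrictAnti μ) (hμpos : ∀ n, 0 < μ n)
    (hμ0 : Tendsto μ atTop (nhds 0))
    (nseq : ℕ → ℕ) (hmono : StrictMono nseq) :
    upperPorosityInf μ (Set.range nseq) =
      1 - Filter.liminf (fun k => μ (nseq (k + 1)) / μ (nseq k)) Filter.atTop :=
  upperPorosityInf_eq_general μ hμanti hμpos nseq hmono
end

section
/- Let E = {n_1, n_2, ...} be an infinite subset of ℕ with n_k < n_{k+1}, and let μ be a scaling function. Then p̄_μ(E) = 1 if and only if liminf_{k→∞} μ(n_{k+1})/μ(n_k) = 0. -/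
/-!
Write `r k = μ (n_{k+1}) / μ (n_k)`. The hole `(n_k, n_{k+1})` alone gives
`λ_μ(E, n_k) / μ(n_k) ≥ 1 - r k`; conversely every hole starting beyond `n_K` lies inside a single
gap `[n_k, n_{k+1}]` with `k ≥ K`, so if `r k ≥ c ≥ 0` for `k ≥ K` then `λ_μ(E, n) ≤ (1 - c) μ(n)`
for `n ≥ n_K`. Together: `p̄_μ(E) = 1 - liminf r`.
-/

open Filter Topology

namespace StrictMono

variable {nseq : ℕ → ℕ}

lemma notMem_range_of_lt_of_lt_succ (hmono : StrictMono nseq) {k m : ℕ}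
    (hk : nseq k < m) (hk' : m < nseq (k + 1)) : m ∉ Set.range nseq := by
  rintro ⟨j, rfl⟩
  have := hmono.lt_iff_lt.1 hk
  have := hmono.lt_iff_lt.1 hk'
  omega

lemma exists_gap_of_hole (hmono : StrictMono nseq) {K a b : ℕ} (hKa : nseq K ≤ a)
    (hhole : ∀ m : ℕ, a < m → m < b → m ∉ Set.range nseq) :
    ∃ k, K ≤ k ∧ nseq k ≤ a ∧ b ≤ nseq (k + 1) := by
  have hex : ∃ m, a < nseq m := ⟨a + 1, Nat.lt_succ_self a |>.trans_le hmono.le_apply⟩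
  obtain ⟨k, hk⟩ : ∃ k, Nat.find hex = k + 1 := by
    refine Nat.exists_eq_add_one.2 (Nat.pos_of_ne_zero fun h0 => ?_)
    have := Nat.find_spec hex
    rw [h0] at this
    exact absurd (hmono.monotone (Nat.zero_le K)) (by omega)
  have hlt : a < nseq (k + 1) := hk ▸ Nat.find_spec hex
  have hle : nseq k ≤ a := not_lt.1 (Nat.find_min hex (by omega))
  refine ⟨k, Nat.lt_succ_iff.1 (hmono.lt_iff_lt.1 (hKa.trans_lt hlt)), hle, ?_⟩
  by_contra! hb
  exact hhole _ hlt hb ⟨k + 1, rfl⟩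

end StrictMono

section lamMu

variable {μ : ℕ → ℝ} (hμanti : StrictAnti μ) (hμpos : ∀ n, 0 < μ n)
include hμanti hμpos

lemma sub_le_lamMu {E : Set ℕ} {n a b : ℕ} (hna : n ≤ a) (hab : a < b)
    (hhole : ∀ m : ℕ, a < m → m < b → m ∉ E) :
    μ a - μ b ≤ lamMu μ E n := by
  refine le_csSup ⟨μ n, ?_⟩ ⟨a, b, hna, hab, hhole, rfl⟩
  rintro d ⟨a', b', hna', -, -, rfl⟩
  linarith [hμanti.antitone hna', hμpos b']

lemma lamMu_nonneg (E : Set ℕ) (n : ℕ) : 0 ≤ lamMu μ E n :=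
  (sub_nonneg.2 (hμanti (Nat.lt_succ_self n)).le).trans <|
    sub_le_lamMu hμanti hμpos le_rfl (Nat.lt_succ_self n) fun _ _ _ => by omega

lemma lamMu_le_of_forall_mul_le {E : Set ℕ} {n : ℕ} {c : ℝ} (hc1 : c ≤ 1)
    (h : ∀ a b, n ≤ a → a < b → (∀ m : ℕ, a < m → m < b → m ∉ E) → c * μ a ≤ μ b) :
    lamMu μ E n ≤ (1 - c) * μ n := by
  refine Real.sSup_le ?_ (mul_nonneg (by linarith) (hμpos n).le)
  rintro d ⟨a, b, hna, hab, hhole, rfl⟩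
  have hb := h a b hna hab hhole
  have ha : (1 - c) * μ a ≤ (1 - c) * μ n :=
    mul_le_mul_of_nonneg_left (hμanti.antitone hna) (by linarith)
  linarith

lemma lamMu_le_self (E : Set ℕ) (n : ℕ) : lamMu μ E n ≤ μ n := by
  simpa using lamMu_le_of_forall_mul_le hμanti hμpos zero_le_one (E := E) (n := n)
    fun a b _ _ _ => by simpa using (hμpos b).le

lemma lamMu_div_le_one (E : Set ℕ) (n : ℕ) : lamMu μ E n / μ n ≤ 1 :=
  (div_le_one (hμpos n)).2 (lamMu_le_self hμanti hμpos E n)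

variable {nseq : ℕ → ℕ} (hmono : StrictMono nseq)
include hmono

lemma one_sub_div_le_lamMu_div (k : ℕ) :
    1 - μ (nseq (k + 1)) / μ (nseq k) ≤ lamMu μ (Set.range nseq) (nseq k) / μ (nseq k) := by
  rw [one_sub_div (hμpos _).ne', div_le_div_iff_of_pos_right (hμpos _)]
  exact sub_le_lamMu hμanti hμpos le_rfl (hmono (Nat.lt_succ_self k))
    fun _ => hmono.notMem_range_of_lt_of_lt_succ

lemma lamMu_range_le {c : ℝ} (hc : 0 ≤ c) (hc1 : c ≤ 1) {K : ℕ}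
    (hK : ∀ k, K ≤ k → c * μ (nseq k) ≤ μ (nseq (k + 1))) {n : ℕ} (hn : nseq K ≤ n) :
    lamMu μ (Set.range nseq) n ≤ (1 - c) * μ n := by
  refine lamMu_le_of_forall_mul_le hμanti hμpos hc1 fun a b hna _ hhole => ?_
  obtain ⟨k, hKk, hka, hbk⟩ := hmono.exists_gap_of_hole (hn.trans hna) hhole
  calc c * μ a ≤ c * μ (nseq k) := mul_le_mul_of_nonneg_left (hμanti.antitone hka) hc
    _ ≤ μ (nseq (k + 1)) := hK k hKk
    _ ≤ μ b := hμanti.antitone hbk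

lemma upperPorosityInf_range_le :
    upperPorosityInf μ (Set.range nseq) ≤
      1 - liminf (fun k => μ (nseq (k + 1)) / μ (nseq k)) atTop := by
  set r := fun k => μ (nseq (k + 1)) / μ (nseq k)
  have hr1 : ∀ k, r k < 1 := fun k => (div_lt_one (hμpos _)).2 (hμanti (hmono k.lt_succ_self))
  have hfcob : IsCoboundedUnder (· ≤ ·) atTop fun n => lamMu μ (Set.range nseq) n / μ n :=
    isCoboundedUnder_le_of_le atTop fun n => div_nonneg (lamMu_nonneg hμanti hμpos _ n) (hμpos n).le
  suffices h : ∀ c < liminf r atTop, upperPorosityInf μ (Set.range nseq) ≤ 1 - c by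
    have := le_of_forall_lt_imp_le_of_dense fun c hc => le_sub_comm.1 (h c hc)
    linarith
  intro c hc
  rcases lt_or_ge c 0 with hc0 | hc0
  · exact (limsup_le_of_le hfcob (.of_forall (lamMu_div_le_one hμanti hμpos _))).trans
      (by linarith)
  obtain ⟨K, hK⟩ := eventually_atTop.1 <| eventually_lt_of_lt_liminf hc <|
    isBoundedUnder_of_eventually_ge (a := 0) (.of_forall fun k => (div_pos (hμpos _) (hμpos _)).le)
  have hKk : ∀ k, K ≤ k → c * μ (nseq k) ≤ μ (nseq (k + 1)) := fun k hk =>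
    ((lt_div_iff₀ (hμpos _)).1 (hK k hk)).le
  refine limsup_le_of_le hfcob (eventually_atTop.2 ⟨nseq K, fun n hn => ?_⟩)
  exact (div_le_iff₀ (hμpos n)).2 <|
    lamMu_range_le hμanti hμpos hmono hc0 ((hK K le_rfl).trans (hr1 K)).le hKk hn

lemma one_sub_liminf_le_upperPorosityInf_range :
    1 - liminf (fun k => μ (nseq (k + 1)) / μ (nseq k)) atTop ≤
      upperPorosityInf μ (Set.range nseq) := by
  refine le_of_forall_pos_le_add fun ε hε => ?_
  set L := liminf (fun k => μ (nseq (k + 1)) / μ (nseq k)) atTop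
  have hsmall : ∃ᶠ k in atTop, μ (nseq (k + 1)) / μ (nseq k) < L + ε :=
    frequently_lt_of_liminf_lt (isCoboundedUnder_ge_of_le atTop (x := 1) fun k =>
      (div_le_one (hμpos _)).2 (hμanti.antitone (hmono.monotone k.le_succ))) (by linarith)
  have hlarge : ∃ᶠ n in atTop, 1 - L - ε ≤ lamMu μ (Set.range nseq) n / μ n :=
    hmono.tendsto_atTop.frequently_map _
      (fun k hk => by linarith [one_sub_div_le_lamMu_div hμanti hμpos hmono k]) hsmall
  have := le_limsup_of_frequently_le hlarge <|
    isBoundedUnder_of_eventually_le (.of_forall (lamMu_div_le_one hμanti hμpos _))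
  exact sub_le_iff_le_add.1 this

lemma upperPorosityInf_range_eq :
    upperPorosityInf μ (Set.range nseq) =
      1 - liminf (fun k => μ (nseq (k + 1)) / μ (nseq k)) atTop :=
  (upperPorosityInf_range_le hμanti hμpos hmono).antisymm
    (one_sub_liminf_le_upperPorosityInf_range hμanti hμpos hmono)

end lamMu

theorem stronglyPorous_at_infinity_iff_general
    (μ : ℕ → ℝ) (hμanti : StrictAnti μ) (hμpos : ∀ n, 0 < μ n)
    (nseq : ℕ → ℕ) (hmono : StrictMono nseq) :
    upperPorosityInf μ (Set.range nseq) = 1 ↔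
      Filter.liminf (fun k => μ (nseq (k + 1)) / μ (nseq k)) Filter.atTop = 0 := by
  rw [upperPorosityInf_range_eq hμanti hμpos hmono]
  exact sub_eq_self

theorem stronglyPorous_at_infinity_iff
    (μ : ℕ → ℝ) (hμanti : StrictAnti μ) (hμpos : ∀ n, 0 < μ n)
    (hμ0 : Tendsto μ atTop (nhds 0))
    (nseq : ℕ → ℕ) (hmono : StrictMono nseq) :
    upperPorosityInf μ (Set.range nseq) = 1 ↔
      Filter.liminf (fun k => μ (nseq (k + 1)) / μ (nseq k)) Filter.atTop = 0 :=
  stronglyPorous_at_infinity_iff_general μ hμanti hμpos nseq hmono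
end

section
/- Let μ : ℕ → (0,∞) be a scaling function that is eventually concave, i.e., (μ(n−1) + μ(n+1))/2 ≥ μ(n) for all sufficiently large n. Then p̲_μ(ℕ) = 1 − limsup_{n→∞} μ(n+1)/μ(n). -/
/-!
Every point of `ℕ` lies in `Set.univ`, so the only holes are the gaps `(k, k+1)` and
`λ_μ(ℕ, n) = sup_{k ≥ n} (μ k - μ (k+1))`. Eventual concavity makes the increments
`μ k - μ (k+1)` eventually nonincreasing, so this supremum is attained at `k = n` and
`λ_μ(ℕ, n) / μ n = 1 - μ (n+1) / μ n` for large `n`; the liminf of `1 - x` is `1 - limsup x`.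
-/

open Filter Topology

open Set

lemma lamMu_univ (μ : ℕ → ℝ) (n : ℕ) :
    lamMu μ univ n = sSup ((fun k => μ k - μ (k + 1)) '' Ici n) := by
  unfold lamMu
  congr 1
  ext d
  constructor
  · rintro ⟨a, b, hna, hab, hgap, rfl⟩
    obtain rfl : b = a + 1 := by
      by_contra
      exact hgap (a + 1) a.lt_succ_self (by omega) trivial
    exact ⟨a, hna, rfl⟩
  · rintro ⟨a, hna, rfl⟩
    exact ⟨a, a + 1, hna, a.lt_succ_self, fun _ _ _ => by omega, rfl⟩

lemma lamMu_univ_eq_of_antitoneOn {μ : ℕ → ℝ} {n : ℕ}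
    (h : AntitoneOn (fun k => μ k - μ (k + 1)) (Ici n)) :
    lamMu μ univ n = μ n - μ (n + 1) := by
  rw [lamMu_univ]
  exact IsGreatest.csSup_eq
    ⟨mem_image_of_mem _ self_mem_Ici, forall_mem_image.2 fun _ hk => h self_mem_Ici hk hk⟩

lemma antitoneOn_sub_succ_of_le_midpoint {μ : ℕ → ℝ} {N : ℕ}
    (h : ∀ n ≥ N, μ n ≤ (μ (n - 1) + μ (n + 1)) / 2) :
    AntitoneOn (fun k => μ k - μ (k + 1)) (Ici N) :=
  antitoneOn_nat_Ici_of_succ_le fun k hk => by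
    have := h (k + 1) (by omega)
    simp only [Nat.add_sub_cancel] at this
    linarith

theorem lowerPorosityInf_of_eventually_concave_general
    (μ : ℕ → ℝ) (hμanti : StrictAnti μ) (hμpos : ∀ n, 0 < μ n)
    -- μ is eventually concave: (μ(n-1) + μ(n+1))/2 ≥ μ(n) for all large n
    (hconc : ∀ᶠ n : ℕ in atTop, μ n ≤ (μ (n - 1) + μ (n + 1)) / 2) :
    lowerPorosityInf μ Set.univ =
      1 - Filter.limsup (fun n => μ (n + 1) / μ n) Filter.atTop := by
  obtain ⟨N, hN⟩ := eventually_atTop.mp hconc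
  have hratio : ∀ᶠ n in atTop, lamMu μ univ n / μ n = 1 - μ (n + 1) / μ n := by
    filter_upwards [eventually_ge_atTop N] with n hn
    rw [lamMu_univ_eq_of_antitoneOn ((antitoneOn_sub_succ_of_le_midpoint hN).mono
      (Ici_subset_Ici.2 hn)), sub_div, div_self (hμpos n).ne']
  rw [lowerPorosityInf, liminf_congr hratio, liminf_const_sub]
  · exact isBoundedUnder_of ⟨1, fun n => (div_le_one (hμpos n)).2 (hμanti n.lt_succ_self).le⟩
  · exact IsBoundedUnder.isCoboundedUnder_le
      (isBoundedUnder_of ⟨0, fun n => (div_pos (hμpos (n + 1)) (hμpos n)).le⟩)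

theorem lowerPorosityInf_of_eventually_concave
    (μ : ℕ → ℝ) (hμanti : StrictAnti μ) (hμpos : ∀ n, 0 < μ n)
    (hμ0 : Tendsto μ atTop (nhds 0))
    -- μ is eventually concave: (μ(n-1) + μ(n+1))/2 ≥ μ(n) for all large n
    (hconc : ∀ᶠ n : ℕ in atTop, μ n ≤ (μ (n - 1) + μ (n + 1)) / 2) :
    lowerPorosityInf μ Set.univ =
      1 - Filter.limsup (fun n => μ (n + 1) / μ n) Filter.atTop :=
  lowerPorosityInf_of_eventually_concave_general μ hμanti hμpos hconc
end

section
/- Let α ∈ [0,1) ∪ (1,∞] and let μ₁, μ₂ be scaling functions. Suppose (n_k) is a strictly increasing sequence of natural numbers with lim_{k→∞} (μ₁(n_{k+1}) μ₂(n_k))/(μ₁(n_k) μ₂(n_{k+1})) = α, and set E = {n_k : k ∈ ℕ}. Then either p̄_{μ₁}(E) ≠ p̄_{μ₂}(E) or p̄_{μ₂}(E) = 1. -/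
open Filter Topology

/-! For `E = {n_0 < n_1 < ⋯}` one has `p̄_μ(E) = 1 - liminf r_k` with `r_k = μ(n_{k+1}) / μ(n_k)`
in `(0, 1)`. If `p̄_{μ₁}(E) = p̄_{μ₂}(E) ≠ 1`, both liminfs equal the same `L > 0`. But
`r¹_k / r²_k → α ≠ 1` yields some `β` with eventually `r¹_k ≤ β r²_k` and `β < 1`, or
`r¹_k ≥ β r²_k` and `β > 1`; taking liminfs gives `L ≤ β L` or `β L ≤ L`, so `L = 0`. -/

section LiminfMul

variable {ι : Type*} {f : Filter ι} [f.NeBot] {u v : ι → ℝ} {β : ℝ}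

lemma liminf_le_mul_liminf (hβ : 0 ≤ β) (hu : IsBoundedUnder (· ≥ ·) f u)
    (hv_ge : IsBoundedUnder (· ≥ ·) f v) (hv_le : IsBoundedUnder (· ≤ ·) f v)
    (h : ∀ᶠ k in f, u k ≤ β * v k) : liminf u f ≤ β * liminf v f := by
  have hmul : Monotone (β * ·) := monotone_mul_left_of_nonneg hβ
  rw [hmul.map_liminf_of_continuousAt v (continuous_const_mul β).continuousAt
    hv_le.isCoboundedUnder_ge hv_ge]
  exact liminf_le_liminf h hu (hmul.isBoundedUnder_le_comp hv_le).isCoboundedUnder_ge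

lemma mul_liminf_le_liminf (hβ : 0 ≤ β) (hu : IsBoundedUnder (· ≤ ·) f u)
    (hv_ge : IsBoundedUnder (· ≥ ·) f v) (hv_le : IsBoundedUnder (· ≤ ·) f v)
    (h : ∀ᶠ k in f, β * v k ≤ u k) : β * liminf v f ≤ liminf u f := by
  have hmul : Monotone (β * ·) := monotone_mul_left_of_nonneg hβ
  rw [hmul.map_liminf_of_continuousAt v (continuous_const_mul β).continuousAt
    hv_le.isCoboundedUnder_ge hv_ge]
  exact liminf_le_liminf h (hmul.isBoundedUnder_ge_comp hv_ge) hu.isCoboundedUnder_ge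

end LiminfMul

noncomputable def gapRatio (μ : ℕ → ℝ) (nseq : ℕ → ℕ) (k : ℕ) : ℝ :=
  μ (nseq (k + 1)) / μ (nseq k)

section GapRatio

variable {μ : ℕ → ℝ} {nseq : ℕ → ℕ}

lemma gapRatio_pos (hpos : ∀ n, 0 < μ n) (k : ℕ) : 0 < gapRatio μ nseq k :=
  div_pos (hpos _) (hpos _)

lemma gapRatio_lt_one (hanti : StrictAnti μ) (hpos : ∀ n, 0 < μ n) (hmono : StrictMono nseq)
    (k : ℕ) : gapRatio μ nseq k < 1 :=
  (div_lt_one (hpos _)).mpr (hanti (hmono k.lt_succ_self))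

lemma isBoundedUnder_ge_gapRatio (hpos : ∀ n, 0 < μ n) :
    IsBoundedUnder (· ≥ ·) atTop (gapRatio μ nseq) :=
  isBoundedUnder_of ⟨0, fun k => (gapRatio_pos hpos k).le⟩

lemma isBoundedUnder_le_gapRatio (hanti : StrictAnti μ) (hpos : ∀ n, 0 < μ n)
    (hmono : StrictMono nseq) : IsBoundedUnder (· ≤ ·) atTop (gapRatio μ nseq) :=
  isBoundedUnder_of ⟨1, fun k => (gapRatio_lt_one hanti hpos hmono k).le⟩

lemma one_sub_gapRatio_mul (hpos : ∀ n, 0 < μ n) (k : ℕ) :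
    (1 - gapRatio μ nseq k) * μ (nseq k) = μ (nseq k) - μ (nseq (k + 1)) := by
  rw [gapRatio, sub_mul, one_mul, div_mul_cancel₀ _ (hpos _).ne']

lemma exists_le_of_hole (hmono : StrictMono nseq) {a b : ℕ} (h0 : nseq 0 ≤ a)
    (hole : ∀ m, a < m → m < b → m ∉ Set.range nseq) :
    ∃ j, nseq j ≤ a ∧ b ≤ nseq (j + 1) := by
  classical
  have hex : ∃ i, a < nseq i := ⟨a + 1, lt_of_lt_of_le a.lt_succ_self hmono.le_apply⟩
  obtain ⟨j, hj⟩ : ∃ j, Nat.find hex = j + 1 :=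
    Nat.exists_eq_succ_of_ne_zero fun h => (h ▸ Nat.find_spec hex).not_ge h0
  have hja : nseq j ≤ a := not_lt.mp (Nat.find_min hex (by omega))
  have hj1 : a < nseq (j + 1) := hj ▸ Nat.find_spec hex
  exact ⟨j, hja, not_lt.mp fun hlt => hole _ hj1 hlt ⟨j + 1, rfl⟩⟩

lemma gap_le_lamMu (hanti : StrictAnti μ) (hpos : ∀ n, 0 < μ n) (hmono : StrictMono nseq)
    {n k : ℕ} (hnk : n ≤ nseq k) :
    μ (nseq k) - μ (nseq (k + 1)) ≤ lamMu μ (Set.range nseq) n := by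
  refine le_csSup ⟨μ n, ?_⟩ ⟨nseq k, nseq (k + 1), hnk, hmono k.lt_succ_self, ?_, rfl⟩
  · rintro d ⟨a, b, hna, -, -, rfl⟩
    linarith [hanti.antitone hna, hpos b]
  · rintro m h1 h2 ⟨j, rfl⟩
    have := hmono.lt_iff_lt.mp h1
    have := hmono.lt_iff_lt.mp h2
    omega

lemma lamMu_le_of_le_gapRatio (hanti : StrictAnti μ) (hpos : ∀ n, 0 < μ n)
    (hmono : StrictMono nseq) {J n : ℕ} {c : ℝ} (hc : ∀ j ≥ J, c ≤ gapRatio μ nseq j)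
    (hn : nseq J < n) : lamMu μ (Set.range nseq) n ≤ (1 - c) * μ n := by
  refine csSup_le ⟨_, n, n + 1, le_rfl, n.lt_succ_self, fun m h1 h2 => by omega, rfl⟩ ?_
  rintro d ⟨a, b, hna, hab, hole, rfl⟩
  obtain ⟨j, hja, hbj⟩ :=
    exists_le_of_hole hmono ((hmono.monotone J.zero_le).trans (by omega)) hole
  have hJj : J ≤ j := by
    have := hmono.lt_iff_lt.mp (show nseq J < nseq (j + 1) by omega)
    omega
  have hr := gapRatio_pos hpos (nseq := nseq) j
  have hr1 := gapRatio_lt_one hanti hpos hmono j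
  have hgap := one_sub_gapRatio_mul hpos (nseq := nseq) j
  have hb : μ (nseq (j + 1)) ≤ μ b := hanti.antitone hbj
  -- The hole lies in `[n_j, n_{j+1}]`; compare with `μ n` on whichever side of `n_j` it is.
  have hkey : μ a - μ b ≤ (1 - gapRatio μ nseq j) * μ n := by
    rcases le_total n (nseq j) with h | h
    · have := mul_le_mul_of_nonneg_left (hanti.antitone h) (sub_nonneg.mpr hr1.le)
      linarith [hanti.antitone hja]
    · have := mul_le_mul_of_nonneg_left (hanti.antitone h) hr.le
      linarith [hanti.antitone hna]
  linarith [mul_le_mul_of_nonneg_right (sub_le_sub_left (hc j hJj) 1) (hpos n).le]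

theorem upperPorosityInf_range_eq_s19 (hanti : StrictAnti μ) (hpos : ∀ n, 0 < μ n)
    (hmono : StrictMono nseq) :
    upperPorosityInf μ (Set.range nseq) = 1 - liminf (gapRatio μ nseq) atTop := by
  set p : ℕ → ℝ := fun n => lamMu μ (Set.range nseq) n / μ n
  set L := liminf (gapRatio μ nseq) atTop
  rw [upperPorosityInf]
  have hp_eventually_le : ∀ c, (∀ᶠ j in atTop, c ≤ gapRatio μ nseq j) →
      ∀ᶠ n in atTop, p n ≤ 1 - c := by
    intro c hc
    obtain ⟨J, hJ⟩ := eventually_atTop.mp hc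
    filter_upwards [eventually_gt_atTop (nseq J)] with n hn
    exact (div_le_iff₀ (hpos n)).mpr (lamMu_le_of_le_gapRatio hanti hpos hmono hJ hn)
  have hp_nseq : ∀ k, 1 - gapRatio μ nseq k ≤ p (nseq k) := fun k =>
    (le_div_iff₀ (hpos _)).mpr
      ((one_sub_gapRatio_mul hpos k).trans_le (gap_le_lamMu hanti hpos hmono le_rfl))
  have hp_nonneg : ∀ n, 0 ≤ p n := fun n =>
    div_nonneg ((sub_pos.mpr (hanti (hmono n.lt_succ_self))).le.trans
      (gap_le_lamMu hanti hpos hmono hmono.le_apply)) (hpos n).le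
  have hp_le : IsBoundedUnder (· ≤ ·) atTop p :=
    ⟨1, by simpa using hp_eventually_le 0 (.of_forall fun k => (gapRatio_pos hpos k).le)⟩
  refine le_antisymm (le_of_forall_pos_le_add fun ε hε => ?_)
    (le_of_forall_pos_le_add fun ε hε => ?_)
  · have hc : ∀ᶠ j in atTop, L - ε ≤ gapRatio μ nseq j :=
      (eventually_lt_of_lt_liminf (by linarith) (isBoundedUnder_ge_gapRatio hpos)).mono
        fun _ => le_of_lt
    refine limsup_le_of_le (isBoundedUnder_of ⟨0, hp_nonneg⟩).isCoboundedUnder_le ?_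
    exact (hp_eventually_le _ hc).mono fun n hn => by linarith
  · have hfreq : ∃ᶠ k in atTop, gapRatio μ nseq k < L + ε :=
      frequently_lt_of_liminf_lt
        (isBoundedUnder_le_gapRatio hanti hpos hmono).isCoboundedUnder_ge (by linarith)
    have : ∃ᶠ n in atTop, 1 - L - ε ≤ p n :=
      hmono.tendsto_atTop.frequently (hfreq.mono fun k hk => by linarith [hp_nseq k])
    linarith [le_limsup_of_frequently_le this hp_le]

end GapRatio

theorem upperPorosityInf_ne_or_eq_one_general
    (μ₁ μ₂ : ℕ → ℝ)
    (hμ₁anti : StrictAnti μ₁) (hμ₁pos : ∀ n, 0 < μ₁ n)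
    (hμ₂anti : StrictAnti μ₂) (hμ₂pos : ∀ n, 0 < μ₂ n)
    (nseq : ℕ → ℕ) (hmono : StrictMono nseq)
    -- the ratios tend to α with α ∈ [0,1) ∪ (1,∞]
    (hα : (∃ α : ℝ, (0 ≤ α ∧ α < 1 ∨ 1 < α) ∧
        Tendsto (fun k => μ₁ (nseq (k + 1)) * μ₂ (nseq k) /
          (μ₁ (nseq k) * μ₂ (nseq (k + 1)))) atTop (nhds α)) ∨
      Tendsto (fun k => μ₁ (nseq (k + 1)) * μ₂ (nseq k) /
        (μ₁ (nseq k) * μ₂ (nseq (k + 1)))) atTop atTop) :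
    upperPorosityInf μ₁ (Set.range nseq) ≠ upperPorosityInf μ₂ (Set.range nseq) ∨
      upperPorosityInf μ₂ (Set.range nseq) = 1 := by
  rw [or_iff_not_imp_left, not_not, upperPorosityInf_range_eq_s19 hμ₁anti hμ₁pos hmono,
    upperPorosityInf_range_eq_s19 hμ₂anti hμ₂pos hmono]
  intro heq
  set r₁ := gapRatio μ₁ nseq
  set r₂ := gapRatio μ₂ nseq
  have hr₁_ge := isBoundedUnder_ge_gapRatio hμ₁pos (nseq := nseq)
  have hr₂_ge := isBoundedUnder_ge_gapRatio hμ₂pos (nseq := nseq)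
  have hr₂_le := isBoundedUnder_le_gapRatio hμ₂anti hμ₂pos hmono
  have hL₂ : 0 ≤ liminf r₂ atTop :=
    le_liminf_of_le hr₂_le.isCoboundedUnder_ge (.of_forall fun k => (gapRatio_pos hμ₂pos k).le)
  suffices liminf r₂ atTop ≤ 0 by linarith
  have below : ∀ β, 0 ≤ β → β < 1 → (∀ᶠ k in atTop, r₁ k / r₂ k < β) →
      liminf r₂ atTop ≤ 0 := fun β hβ0 hβ1 h => by
    have := liminf_le_mul_liminf hβ0 hr₁_ge hr₂_ge hr₂_le
      (h.mono fun k hk => ((div_lt_iff₀ (gapRatio_pos hμ₂pos k)).mp hk).le)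
    nlinarith
  have above : ∀ β, 1 < β → (∀ᶠ k in atTop, β < r₁ k / r₂ k) →
      liminf r₂ atTop ≤ 0 := fun β hβ1 h => by
    have := mul_liminf_le_liminf (by linarith)
      (isBoundedUnder_le_gapRatio hμ₁anti hμ₁pos hmono) hr₂_ge hr₂_le (h.mono fun k hk => ((lt_div_iff₀ (gapRatio_pos hμ₂pos k)).mp hk).le)
    nlinarith
  have hratio :
      (fun k => μ₁ (nseq (k + 1)) * μ₂ (nseq k) / (μ₁ (nseq k) * μ₂ (nseq (k + 1))))
        = fun k => r₁ k / r₂ k := funext fun k => (div_div_div_eq _ _ _ _).symm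
  rw [hratio] at hα
  rcases hα with ⟨α, ⟨hα0, hα1⟩ | hα1, hlim⟩ | hlim
  · exact below ((α + 1) / 2) (by positivity) (by linarith)
      (hlim.eventually_lt_const (by linarith))
  · exact above ((α + 1) / 2) (by linarith) (hlim.eventually_const_lt (by linarith))
  · exact above 2 one_lt_two (hlim.eventually_gt_atTop 2)

theorem upperPorosityInf_ne_or_eq_one
    (μ₁ μ₂ : ℕ → ℝ)
    (hμ₁anti : StrictAnti μ₁) (hμ₁pos : ∀ n, 0 < μ₁ n) (hμ₁0 : Tendsto μ₁ atTop (nhds 0))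
    (hμ₂anti : StrictAnti μ₂) (hμ₂pos : ∀ n, 0 < μ₂ n) (hμ₂0 : Tendsto μ₂ atTop (nhds 0))
    (nseq : ℕ → ℕ) (hmono : StrictMono nseq)
    -- the ratios tend to α with α ∈ [0,1) ∪ (1,∞]
    (hα : (∃ α : ℝ, (0 ≤ α ∧ α < 1 ∨ 1 < α) ∧
        Tendsto (fun k => μ₁ (nseq (k + 1)) * μ₂ (nseq k) /
          (μ₁ (nseq k) * μ₂ (nseq (k + 1)))) atTop (nhds α)) ∨
      Tendsto (fun k => μ₁ (nseq (k + 1)) * μ₂ (nseq k) /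
        (μ₁ (nseq k) * μ₂ (nseq (k + 1)))) atTop atTop) :
    upperPorosityInf μ₁ (Set.range nseq) ≠ upperPorosityInf μ₂ (Set.range nseq) ∨
      upperPorosityInf μ₂ (Set.range nseq) = 1 :=
  upperPorosityInf_ne_or_eq_one_general μ₁ μ₂ hμ₁anti hμ₁pos hμ₂anti hμ₂pos nseq hmono hα
end
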